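/- Let sinc : ℝ → ℝ be the normalized sinc function, sinc(x) = sin(πx)/(πx) for x ≠ 0 and sinc(0) = 1. For all real numbers B > 0, L > 0, u_i and u, the following identity holds: ∫_{−B/2}^{B/2} sinc(Lγ) · exp(2πi γ (u_i − u)) dγ = (1/L) · ∫_{u_i − L/2}^{u_i + L/2} B · sinc(B(u − v)) dv. That is, the response at target parameter u of the window-limited atom obtained by modulating the atomic signal of parameter u_i with the function γ ↦ sinc(Lγ) equals the convolution of the rectangular function of width L and height 1/L centered at u_i with the unmodulated window response v ↦ B·sinc(Bv). -/

import Mathlib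

set_option autoImplicit false

open Real Complex intervalIntegral MeasureTheory

/-- The normalized sinc function: `sinc x = sin (π x) / (π x)` for `x ≠ 0`, `sinc 0 = 1`. -/
noncomputable def nsinc (x : ℝ) : ℝ := if x = 0 then 1 else Real.sin (π * x) / (π * x)

lemma nsinc_neg (x : ℝ) : nsinc (-x) = nsinc x := by
  unfold nsinc
  rcases eq_or_ne x 0 with h | h
  · simp [h]
  · rw [if_neg (neg_ne_zero.mpr h), if_neg h, mul_neg, Real.sin_neg, neg_div_neg_eq]

/-- Key computation: the integral of a complex exponential over a symmetric window. -/
lemma exp_window_integral (W c : ℝ) (hW : W ≠ 0) :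
    ∫ x in (-(W / 2))..(W / 2), Complex.exp (2 * π * I * x * c)
      = (W : ℂ) * nsinc (W * c) := by
  rcases eq_or_ne c 0 with hc | hc
  · simp only [hc, Complex.ofReal_zero, mul_zero, Complex.exp_zero, nsinc, if_pos rfl]
    rw [intervalIntegral.integral_const]
    push_cast
    simp [smul_eq_mul]
  · have hc2 : (2 * π * I * c : ℂ) ≠ 0 := by
      apply mul_ne_zero (mul_ne_zero (mul_ne_zero two_ne_zero _) Complex.I_ne_zero)
      · exact_mod_cast hc
      · exact_mod_cast Real.pi_ne_zero
    have hfun : (fun x : ℝ => Complex.exp (2 * π * I * x * c))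
        = fun x : ℝ => Complex.exp ((2 * π * I * c) * x) := by
      funext x; congr 1; ring
    rw [hfun, integral_exp_mul_complex hc2]
    have h1 : (2 * π * I * c : ℂ) * (W / 2 : ℝ) = (π * W * c : ℝ) * I := by
      push_cast; ring
    have h2 : (2 * π * I * c : ℂ) * (-(W / 2) : ℝ) = -((π * W * c : ℝ)) * I := by
      push_cast; ring
    rw [h1, h2, Complex.exp_mul_I, Complex.exp_mul_I]
    rw [Complex.cos_neg, Complex.sin_neg]
    have hWc : W * c ≠ 0 := mul_ne_zero hW hc
    have hns : nsinc (W * c) = Real.sin (π * (W * c)) / (π * (W * c)) := by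
      unfold nsinc; rw [if_neg hWc]
    rw [hns]
    have hsin : (Complex.sin ((π * W * c : ℝ) : ℂ)) = ((Real.sin (π * (W * c)) : ℝ) : ℂ) := by
      rw [← Complex.ofReal_sin]
      congr 1
      push_cast; ring
    rw [hsin]
    have hπ : (π : ℂ) ≠ 0 := by exact_mod_cast Real.pi_ne_zero
    have hcC : (c : ℂ) ≠ 0 := by exact_mod_cast hc
    have hWC : (W : ℂ) ≠ 0 := by exact_mod_cast hW
    push_cast
    field_simp
    ring

/-- The response at target parameter `u` of the window-limited
atom of parameter `u_i` modulated by `γ ↦ sinc (L γ)` equals the convolution of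
the rectangle of width `L` and height `1/L` centered at `u_i` with the
unmodulated window response `v ↦ B · sinc (B v)`. -/
theorem modulated_atom_response_eq_rect_convolution
    (B L ui u : ℝ) (hB : 0 < B) (hL : 0 < L) :
    ∫ γ in (-(B / 2))..(B / 2),
        (nsinc (L * γ) : ℂ) * Complex.exp (2 * π * I * γ * (ui - u))
      = (1 / L : ℂ) *
          ∫ v in (ui - L / 2)..(ui + L / 2), ((B : ℂ) * (nsinc (B * (u - v)) : ℂ)) := by
  have hLC : (L : ℂ) ≠ 0 := by exact_mod_cast hL.ne'
  -- Step 1: rewrite the integrand as an integral over v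
  have hstep : ∀ γ : ℝ, (nsinc (L * γ) : ℂ) * Complex.exp (2 * π * I * γ * (ui - u))
      = (1 / L : ℂ) * ∫ v in (ui - L / 2)..(ui + L / 2), Complex.exp (2 * π * I * (v - u) * γ) := by
    intro γ
    have h1 : (∫ v in (ui - L / 2)..(ui + L / 2), Complex.exp (2 * π * I * (v - ui) * γ))
        = (L : ℂ) * nsinc (L * γ) := by
      have hcomp := intervalIntegral.integral_comp_sub_right
        (a := ui - L / 2) (b := ui + L / 2)
        (fun t : ℝ => Complex.exp (2 * π * I * t * γ)) ui
      simp only [Complex.ofReal_sub] at hcomp ⊢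
      rw [hcomp]
      have hb1 : ui - L / 2 - ui = -(L / 2) := by ring
      have hb2 : ui + L / 2 - ui = L / 2 := by ring
      rw [hb1, hb2, exp_window_integral L γ hL.ne']
    have h2 : (∫ v in (ui - L / 2)..(ui + L / 2), Complex.exp (2 * π * I * (v - u) * γ))
        = (∫ v in (ui - L / 2)..(ui + L / 2), Complex.exp (2 * π * I * (v - ui) * γ))
            * Complex.exp (2 * π * I * γ * (ui - u)) := by
      rw [← intervalIntegral.integral_mul_const]
      apply intervalIntegral.integral_congr
      intro v _
      simp only [← Complex.exp_add]
      congr 1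
      push_cast
      ring
    rw [h2, h1]
    field_simp
  rw [intervalIntegral.integral_congr (fun γ _ => hstep γ)]
  rw [intervalIntegral.integral_const_mul]
  congr 1
  -- Step 2: Fubini
  have hab : -(B / 2) ≤ B / 2 := by linarith
  have hcd : ui - L / 2 ≤ ui + L / 2 := by linarith
  have hcont : Continuous (Function.uncurry fun γ v : ℝ => Complex.exp (2 * π * I * (v - u) * γ)) := by
    apply Complex.continuous_exp.comp
    fun_prop
  have hint : Integrable (Function.uncurry fun γ v : ℝ => Complex.exp (2 * π * I * (v - u) * γ))
      ((volume.restrict (Set.Ioc (-(B / 2)) (B / 2))).prod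
        (volume.restrict (Set.Ioc (ui - L / 2) (ui + L / 2)))) := by
    rw [Measure.prod_restrict]
    exact ((hcont.continuousOn.integrableOn_compact (isCompact_Icc.prod isCompact_Icc)).mono_set
      (Set.prod_mono Set.Ioc_subset_Icc_self Set.Ioc_subset_Icc_self))
  rw [intervalIntegral.integral_of_le hab]
  simp_rw [intervalIntegral.integral_of_le hcd]
  rw [MeasureTheory.integral_integral_swap hint]
  apply MeasureTheory.setIntegral_congr_fun measurableSet_Ioc
  intro v _
  show (∫ γ in Set.Ioc (-(B / 2)) (B / 2), Complex.exp (2 * π * I * ((v : ℂ) - u) * γ))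
      = (B : ℂ) * (nsinc (B * (u - v)) : ℂ)
  rw [← intervalIntegral.integral_of_le hab]
  have hfun : (fun γ : ℝ => Complex.exp (2 * π * I * ((v : ℂ) - (u : ℂ)) * γ))
      = fun γ : ℝ => Complex.exp (2 * π * I * (γ : ℂ) * ((v - u : ℝ) : ℂ)) := by
    funext γ
    congr 1
    push_cast
    ring
  rw [hfun, exp_window_integral B (v - u) hB.ne']
  rw [show B * (u - v) = -(B * (v - u)) by ring, nsinc_neg]
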